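/- For every function f ∈ 𝔉 with f ≺ 𝔦 (where 𝔦(n) = n), the lamplighter group ℤ₂ ≀ ℤ does not belong to the class ℬ_f. -/

import Mathlib

namespace CAG

/-- The convolution `w₁ ⊗ w₂` of two words, over the padded alphabet
`(Σ ∪ {⋄})²`, modelled as `Option α × Option α` where `none` is the padding symbol `⋄`. -/
def conv {α : Type*} : List α → List α → List (Option α × Option α)
  | [], [] => []
  | a :: as, [] => (some a, none) :: conv as []
  | [], b :: bs => (none, some b) :: conv [] bs
  | a :: as, b :: bs => (some a, some b) :: conv as bs

/-- A binary relation on words is regular if the language of convolutions of its pairs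
is a regular language. -/
def IsRegularRel {α : Type*} (R : Set (List α × List α)) : Prop :=
  Language.IsRegular {w | ∃ p ∈ R, w = conv p.1 p.2}

variable {G : Type*} [Group G]

/-- The alphabet `S = A ∪ A⁻¹` associated to a generating set `A ⊆ G`. -/
def Alph (A : Set G) : Type _ := {x : G // x ∈ A ∪ A⁻¹}

/-- The canonical evaluation map `π : S* → G`. -/
def eval (A : Set G) (w : List (Alph A)) : G := (w.map Subtype.val).prod

/-- The word length `d_A(g)` of `g` with respect to the generating set `A`. -/
noncomputable def wordLength (A : Set G) (g : G) : ℕ :=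
  sInf {n | ∃ w : List (Alph A), eval A w = g ∧ w.length = n}

/-- The distance `d_A(g₁, g₂)` in the Cayley graph of `G` with respect to `A`. -/
noncomputable def cayleyDist (A : Set G) (g₁ g₂ : G) : ℕ := wordLength A (g₁⁻¹ * g₂)

/-- `ψ : L → G` is a Cayley automatic representation of `G` (w.r.t. the
generating set `A`): `L ⊆ S*` is regular, `ψ` is a bijection from `L` onto `G`, and for every
`a ∈ A` the relation `R_a = {(ψ⁻¹(g), ψ⁻¹(g·a)) : g ∈ G}` is regular. -/
def IsCayleyAutomaticRep (A : Set G) (L : Language (Alph A)) (ψ : List (Alph A) → G) : Prop :=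
  Language.IsRegular L ∧ Set.BijOn ψ L Set.univ ∧
    ∀ a ∈ A, IsRegularRel {p : List (Alph A) × List (Alph A) |
      p.1 ∈ L ∧ p.2 ∈ L ∧ ψ p.2 = ψ p.1 * a}

/-- `G` is Cayley automatic with respect to the generating set `A`. -/
def IsCayleyAutomatic (A : Set G) : Prop :=
  ∃ (L : Language (Alph A)) (ψ : List (Alph A) → G), IsCayleyAutomaticRep A L ψ

/-- `G` is automatic (in the sense of Thurston) with respect to the generating set `A`:
there is a regular language `L ⊆ S*` on which the canonical evaluation map `π` is a bijection
onto `G` and all the relations `R_a`, `a ∈ A`, are regular. -/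
def IsAutomatic (A : Set G) : Prop :=
  ∃ L : Language (Alph A), IsCayleyAutomaticRep A L (eval A)

/-- The family `𝔉` of non-decreasing, non-negative real valued functions defined on a
final segment `[Q, ∞)` of `ℕ` (values below `Q` are irrelevant junk values). -/
structure FFun where
  Q : ℕ
  toFun : ℕ → ℝ
  nonneg : ∀ n, Q ≤ n → 0 ≤ toFun n
  mono : ∀ m n, Q ≤ m → m ≤ n → toFun m ≤ toFun n

/-- `h ⪯ f` : there are positive integers `K, M, N`, with `[N,∞)` contained in the domains of
`h` and `f`, such that `h(n) ≤ K·f(M·n)` for all `n ≥ N`. -/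
def FFun.Preceq (h f : FFun) : Prop :=
  ∃ K M N : ℕ, 0 < K ∧ 0 < M ∧ 0 < N ∧ h.Q ≤ N ∧ f.Q ≤ N ∧
    ∀ n, N ≤ n → h.toFun n ≤ K * f.toFun (M * n)

/-- `h ≍ f` iff `h ⪯ f` and `f ⪯ h`. -/
def FFun.Equiv (h f : FFun) : Prop := h.Preceq f ∧ f.Preceq h

/-- `h ≺ f` iff `h ⪯ f` and not `h ≍ f`. -/
def FFun.Prec (h f : FFun) : Prop := h.Preceq f ∧ ¬ h.Equiv f

/-- `G ∈ ℬ_f` with respect to the generating set `A`: there is a Cayley automatic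
representation `ψ : L → G` such that the function
`h(n) = max{d_A(π(w), ψ(w)) : w ∈ L, |w| ≤ n}` satisfies `h ⪯ f`
(stated equivalently: for some positive `K, M, N` with `N ≥ Q_f`, every `w ∈ L` with `|w| ≤ n`
and `n ≥ N` satisfies `d_A(π(w), ψ(w)) ≤ K·f(M·n)`). -/
def InB (A : Set G) (f : FFun) : Prop :=
  ∃ (L : Language (Alph A)) (ψ : List (Alph A) → G),
    IsCayleyAutomaticRep A L ψ ∧
    ∃ K M N : ℕ, 0 < K ∧ 0 < M ∧ 0 < N ∧ f.Q ≤ N ∧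
      ∀ n, N ≤ n → ∀ w ∈ L, w.length ≤ n →
        (cayleyDist A (eval A w) (ψ w) : ℝ) ≤ K * f.toFun (M * n)

/-- The identity function `𝔦(n) = n` as an element of `𝔉`. -/
def identF : FFun where
  Q := 1
  toFun n := n
  nonneg n _ := by positivity
  mono m n _ h := by simpa using (Nat.cast_le (α := ℝ)).mpr h

/-- The exponential function `𝔢(n) = exp n` as an element of `𝔉`. -/
noncomputable def expF : FFun where
  Q := 1
  toFun n := Real.exp n
  nonneg n _ := (Real.exp_pos n).le
  mono m n _ h := Real.exp_le_exp.mpr (by exact_mod_cast h)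

end CAG
namespace CAG

/-- Configurations of lamps: finitely supported functions `ℤ → ℤ₂`. -/
abbrev Lamps := ℤ →₀ ZMod 2

/-- Shift of a lamp configuration by `m`. -/
noncomputable def lampShift (m : ℤ) (f : Lamps) : Lamps := Finsupp.mapDomain (· + m) f

lemma lampShift_zero (f : Lamps) : lampShift 0 f = f := by
  simp only [lampShift, add_zero]
  exact Finsupp.mapDomain_id

lemma lampShift_lampShift (m m' : ℤ) (f : Lamps) :
    lampShift m (lampShift m' f) = lampShift (m' + m) f := by
  rw [lampShift, lampShift, lampShift, ← Finsupp.mapDomain_comp]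
  congr 1
  funext x
  simp [add_assoc]

lemma lampShift_add (m : ℤ) (f g : Lamps) :
    lampShift m (f + g) = lampShift m f + lampShift m g :=
  Finsupp.mapDomain_add

/-- The lamplighter group `ℤ₂ ≀ ℤ = (⊕_{i ∈ ℤ} ℤ₂) ⋊ ℤ`: elements are pairs `(f, m)` of a
finitely supported lamp configuration `f : ℤ → ℤ₂` and the lamplighter position `m ∈ ℤ`,
with `ℤ` acting on the lamp configurations by shift. -/
def Lamplighter := Lamps × ℤ

noncomputable instance : Mul Lamplighter :=
  ⟨fun g h => (g.1 + lampShift g.2 h.1, g.2 + h.2)⟩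

instance : One Lamplighter := ⟨((0 : Lamps), (0 : ℤ))⟩

noncomputable instance : Inv Lamplighter := ⟨fun g => (lampShift (-g.2) g.1, -g.2)⟩

lemma Lamplighter.mul_def (g h : Lamplighter) :
    g * h = (g.1 + lampShift g.2 h.1, g.2 + h.2) := rfl

lemma Lamplighter.one_def : (1 : Lamplighter) = ((0 : Lamps), (0 : ℤ)) := rfl

lemma Lamplighter.inv_def (g : Lamplighter) : g⁻¹ = (lampShift (-g.2) g.1, -g.2) := rfl

noncomputable instance : Group Lamplighter where
  mul_assoc a b c := by
    rw [Lamplighter.mul_def, Lamplighter.mul_def, Lamplighter.mul_def, Lamplighter.mul_def]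
    refine Prod.ext ?_ (add_assoc _ _ _)
    show (a.1 + lampShift a.2 b.1) + lampShift (a.2 + b.2) c.1
        = a.1 + lampShift a.2 (b.1 + lampShift b.2 c.1)
    rw [lampShift_add, lampShift_lampShift, add_comm a.2 b.2, add_assoc]
  one_mul a := by
    rw [Lamplighter.mul_def, Lamplighter.one_def]
    refine Prod.ext ?_ (zero_add _)
    show (0 : Lamps) + lampShift 0 a.1 = a.1
    rw [lampShift_zero, zero_add]
  mul_one a := by
    rw [Lamplighter.mul_def, Lamplighter.one_def]
    refine Prod.ext ?_ (add_zero _)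
    show a.1 + lampShift a.2 (0 : Lamps) = a.1
    rw [lampShift, Finsupp.mapDomain_zero, add_zero]
  inv_mul_cancel a := by
    rw [Lamplighter.mul_def, Lamplighter.inv_def, Lamplighter.one_def]
    refine Prod.ext ?_ (neg_add_cancel _)
    show lampShift (-a.2) a.1 + lampShift (-a.2) a.1 = (0 : Lamps)
    ext i
    have h2 : ∀ x : ZMod 2, x + x = 0 := by decide
    simp [h2]

/-- The generator `a` of the lamplighter group: the lamp at the origin is lit, the
lamplighter points at the origin. -/
noncomputable def Lamplighter.a : Lamplighter := (Finsupp.single 0 1, 0)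

/-- The generator `t` of the lamplighter group: all lamps unlit, the lamplighter
points at position `1`. -/
def Lamplighter.t : Lamplighter := ((0 : Lamps), 1)

end CAG

/-!
Let `ψ : L → G` be a Cayley automatic representation and `Φ` a bound for the distortion
`d(π w, ψ w)` on words of length `≤ n`. Pumping the automaton of `R_s` shows that `ψ⁻¹ g` and
`ψ⁻¹ (g s)` have lengths differing by at most its number `q` of states, and that they fellow travel
at distance `O(Φ + q)`. Hence, writing `û g` for `ψ⁻¹ g` followed by a geodesic to `g`, the paths
`û g · s` and `û (g s)` fellow travel, and the ladder between them is filled by relators of length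
`O(Φ + q)`. Telescoping along a relator `w` of `G`, whose prefixes only involve representatives of
length `O(|w|)`, shows that `w` is killed by every homomorphism from words to a group which kills
all relators of length `O(Φ(O(|w|)) + q)`.

The lamplighter group is not finitely presented, in a quantitative way: if the lamplighter may
toggle lamp `p` only while lamp `p + r + 1` is off, all relations of length `≤ r + 1` still hold,
but the relator `(a t^(r+1) a t^-(r+1))²` of length `4r + 8` acts nontrivially. When `Φ(n) = o(n)`,
as `f ≺ 𝔦` forces, these two facts are incompatible for large `r`.
-/

namespace CAG

open Function

section Words

variable {G : Type*} [Group G] {A : Set G}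

def Alph.inv (x : Alph A) : Alph A :=
  ⟨x.1⁻¹, by simpa [Set.mem_inv, or_comm] using x.2⟩

@[simp] lemma Alph.val_inv (x : Alph A) : x.inv.1 = x.1⁻¹ := rfl

-- `eval` unfolds to a `List.map` that is ill-typed up to reducible unfolding of `Alph`,
-- which `simp` cannot rewrite; this restatement is well-typed.
lemma eval_eq_prod_map (w : List (Alph A)) : eval A w = (w.map fun x : Alph A => x.1).prod := rfl

@[simp] lemma eval_nil : eval A ([] : List (Alph A)) = 1 := rfl

@[simp] lemma eval_cons (x : Alph A) (w : List (Alph A)) : eval A (x :: w) = x.1 * eval A w :=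
  List.prod_cons

@[simp] lemma eval_singleton (x : Alph A) : eval A [x] = x.1 := List.prod_singleton

@[simp] lemma eval_append (u v : List (Alph A)) : eval A (u ++ v) = eval A u * eval A v := by
  simp [eval_eq_prod_map]

lemma eval_replicate (m : ℕ) (x : Alph A) : eval A (List.replicate m x) = x.1 ^ m := by
  rw [eval_eq_prod_map, List.map_replicate, List.prod_replicate]

lemma eval_reverse_map_inv (w : List (Alph A)) :
    eval A (w.reverse.map Alph.inv) = (eval A w)⁻¹ := by
  simp [eval_eq_prod_map, List.prod_inv_reverse, Function.comp_def]

lemma eval_surjective_of_closure_eq_top (hA : Subgroup.closure A = ⊤) : Surjective (eval A) := by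
  intro g
  have hg : g ∈ (Subgroup.closure A).toSubmonoid := by simp [hA]
  rw [Subgroup.closure_toSubmonoid] at hg
  obtain ⟨l, hl, rfl⟩ := Submonoid.exists_list_of_mem_closure hg
  refine ⟨l.pmap (fun g hg => (⟨g, hg⟩ : Alph A)) hl, ?_⟩
  rw [eval_eq_prod_map]
  congr 1
  exact (List.map_pmap ..).trans ((List.pmap_eq_map ..).trans (List.map_id _))

lemma wordLength_eval_le (w : List (Alph A)) : wordLength A (eval A w) ≤ w.length :=
  Nat.sInf_le ⟨w, rfl, rfl⟩

lemma cayleyDist_mul_right (g s : G) : cayleyDist A g (g * s) = wordLength A s := by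
  simp [cayleyDist]

lemma cayleyDist_eval_append_le (u v : List (Alph A)) :
    cayleyDist A (eval A u) (eval A (u ++ v)) ≤ v.length := by
  rw [eval_append, cayleyDist_mul_right]
  exact wordLength_eval_le v

lemma cayleyDist_eval_take_append_le (u v : List (Alph A)) (i : ℕ) :
    cayleyDist A (eval A (u.take i)) (eval A ((u ++ v).take i)) ≤ v.length := by
  rw [List.take_append]
  exact (cayleyDist_eval_append_le _ _).trans (List.length_take_le' _ _)

lemma exists_eval_eq_and_length_eq_wordLength (hA : Surjective (eval A)) (g : G) :
    ∃ w : List (Alph A), eval A w = g ∧ w.length = wordLength A g := by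
  obtain ⟨w, rfl⟩ := hA g
  have hne : {n | ∃ v : List (Alph A), eval A v = eval A w ∧ v.length = n}.Nonempty :=
    ⟨w.length, w, rfl, rfl⟩
  exact Nat.sInf_mem hne

lemma wordLength_mul_le (hA : Surjective (eval A)) (g h : G) :
    wordLength A (g * h) ≤ wordLength A g + wordLength A h := by
  obtain ⟨u, rfl, hu⟩ := exists_eval_eq_and_length_eq_wordLength hA g
  obtain ⟨v, rfl, hv⟩ := exists_eval_eq_and_length_eq_wordLength hA h
  simpa [← hu, ← hv] using wordLength_eval_le (u ++ v)

lemma wordLength_inv_le (hA : Surjective (eval A)) (g : G) :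
    wordLength A g⁻¹ ≤ wordLength A g := by
  obtain ⟨w, rfl, hw⟩ := exists_eval_eq_and_length_eq_wordLength hA g
  have := wordLength_eval_le (w.reverse.map Alph.inv)
  rwa [eval_reverse_map_inv, List.length_map, List.length_reverse, hw] at this

lemma cayleyDist_comm (hA : Surjective (eval A)) (g h : G) :
    cayleyDist A g h = cayleyDist A h g :=
  le_antisymm (by simpa [cayleyDist] using wordLength_inv_le hA (h⁻¹ * g))
    (by simpa [cayleyDist] using wordLength_inv_le hA (g⁻¹ * h))

lemma cayleyDist_triangle (hA : Surjective (eval A)) (g₁ g₂ g₃ : G) :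
    cayleyDist A g₁ g₃ ≤ cayleyDist A g₁ g₂ + cayleyDist A g₂ g₃ := by
  simpa [cayleyDist, mul_assoc] using wordLength_mul_le hA (g₁⁻¹ * g₂) (g₂⁻¹ * g₃)

end Words

section Convolution

variable {α : Type*}

def convLang (R : Set (List α × List α)) : Language (Option α × Option α) :=
  {w | ∃ p ∈ R, w = conv p.1 p.2}

@[simp] lemma filterMap_fst_conv (u v : List α) : (conv u v).filterMap Prod.fst = u := by
  induction u, v using conv.induct <;> simp [conv, *]

@[simp] lemma filterMap_snd_conv (u v : List α) : (conv u v).filterMap Prod.snd = v := by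
  induction u, v using conv.induct <;> simp [conv, *]

lemma map_swap_conv (u v : List α) : (conv u v).map Prod.swap = conv v u := by
  induction u, v using conv.induct <;> simp_all [conv]

lemma take_conv (u v : List α) (i : ℕ) : (conv u v).take i = conv (u.take i) (v.take i) := by
  induction u, v using conv.induct generalizing i <;> cases i <;> simp_all [conv]

lemma conv_eq_append_of_length_le {u v : List α} (h : u.length ≤ v.length) :
    conv u v = conv u (v.take u.length) ++ (v.drop u.length).map fun b => (none, some b) := by
  induction u, v using conv.induct <;> simp_all [conv]

end Convolution

section Automata

variable {β σ : Type*} [Fintype σ]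

lemma exists_sublist_evalFrom_eq (M : DFA β σ) (s : σ) (x : List β) :
    ∃ y, y.Sublist x ∧ y.length < Fintype.card σ ∧ M.evalFrom s y = M.evalFrom s x := by
  induction hx : x.length using Nat.strong_induction_on generalizing x with
  | _ n ih =>
    by_cases hlt : x.length < Fintype.card σ
    · exact ⟨x, List.Sublist.refl x, hlt, rfl⟩
    obtain ⟨_, a, b, c, rfl, -, hb, ha, hb', -⟩ :=
      M.evalFrom_split (not_lt.mp hlt) (rfl : M.evalFrom s x = _)
    obtain ⟨y, hy, hyl, hye⟩ := ih (a ++ c).length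
      (by simpa [← hx] using List.length_pos_iff.mpr hb) (a ++ c) rfl
    refine ⟨y, hy.trans (List.sublist_append_left a b |>.append_right c), hyl, ?_⟩
    rw [hye, DFA.evalFrom_of_append, DFA.evalFrom_of_append, DFA.evalFrom_of_append, ha, hb']

lemma exists_sublist_append_mem_accepts (M : DFA β σ) {w x : List β}
    (hx : w ++ x ∈ M.accepts) :
    ∃ y, y.Sublist x ∧ y.length < Fintype.card σ ∧ w ++ y ∈ M.accepts := by
  obtain ⟨y, hy, hyl, hye⟩ := exists_sublist_evalFrom_eq M (M.eval w) x
  refine ⟨y, hy, hyl, ?_⟩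
  rw [DFA.mem_accepts, DFA.eval, DFA.evalFrom_of_append] at hx ⊢
  rwa [← DFA.eval, hye]

end Automata

section RegularRelations

variable {α : Type*} {R : Set (List α × List α)} {q : ℕ}

def IsRegularRelOfStates (R : Set (List α × List α)) (q : ℕ) : Prop :=
  ∃ (σ : Type) (_ : Fintype σ) (M : DFA (Option α × Option α) σ),
    Fintype.card σ ≤ q ∧ M.accepts = convLang R

lemma IsRegularRel.exists_isRegularRelOfStates (h : IsRegularRel R) :
    ∃ q, IsRegularRelOfStates R q := by
  obtain ⟨σ, _, M, hM⟩ := h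
  exact ⟨Fintype.card σ, σ, _, M, le_rfl, hM⟩

lemma IsRegularRelOfStates.mono {q' : ℕ} (h : IsRegularRelOfStates R q) (hq : q ≤ q') :
    IsRegularRelOfStates R q' := by
  obtain ⟨σ, _, M, hσ, hM⟩ := h
  exact ⟨σ, _, M, hσ.trans hq, hM⟩

lemma IsRegularRelOfStates.preimage_swap (h : IsRegularRelOfStates R q) :
    IsRegularRelOfStates (Prod.swap ⁻¹' R) q := by
  obtain ⟨σ, _, M, hσ, hM⟩ := h
  refine ⟨σ, _, M.comap Prod.swap, hσ, ?_⟩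
  ext w
  rw [DFA.accepts_comap, hM]
  constructor
  · rintro ⟨p, hp, hpw⟩
    refine ⟨p.swap, hp, ?_⟩
    rw [← map_swap_conv]
    simp only [Prod.snd_swap, Prod.fst_swap, ← hpw, List.map_map, Prod.swap_swap_eq, List.map_id]
  · rintro ⟨p, hp, rfl⟩
    exact ⟨p.swap, hp, map_swap_conv _ _⟩

lemma IsRegularRelOfStates.exists_take_append_mem (hR : IsRegularRelOfStates R q)
    {u v : List α} (huv : (u, v) ∈ R) (i : ℕ) :
    ∃ x y : List α, x.length < q ∧ y.length < q ∧ (u.take i ++ x, v.take i ++ y) ∈ R := by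
  obtain ⟨σ, _, M, hσ, hM⟩ := hR
  have hacc : (conv u v).take i ++ (conv u v).drop i ∈ M.accepts := by
    rw [List.take_append_drop, hM]
    exact ⟨(u, v), huv, rfl⟩
  obtain ⟨D, -, hD, hacc'⟩ := exists_sublist_append_mem_accepts M hacc
  rw [hM] at hacc'
  obtain ⟨⟨u', v'⟩, hp, hpD⟩ := hacc'
  have hu' : u' = u.take i ++ D.filterMap Prod.fst := by
    rw [← filterMap_fst_conv u' v', ← hpD, List.filterMap_append, take_conv, filterMap_fst_conv]
  have hv' : v' = v.take i ++ D.filterMap Prod.snd := by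
    rw [← filterMap_snd_conv u' v', ← hpD, List.filterMap_append, take_conv, filterMap_snd_conv]
  rw [hu', hv'] at hp
  refine ⟨_, _, ?_, ?_, hp⟩ <;>
    exact (List.length_filterMap_le _ _).trans_lt (hD.trans_le hσ)

lemma IsRegularRelOfStates.length_le_of_right_unique (hR : IsRegularRelOfStates R q)
    (hfun : ∀ u v v', (u, v) ∈ R → (u, v') ∈ R → v = v') {u v : List α} (huv : (u, v) ∈ R) :
    v.length ≤ u.length + q := by
  rcases le_or_gt v.length u.length with h | h
  · omega
  obtain ⟨σ, _, M, hσ, hM⟩ := hR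
  have hacc : conv u (v.take u.length) ++ (v.drop u.length).map (fun b => (none, some b)) ∈
      M.accepts := by
    rw [← conv_eq_append_of_length_le h.le, hM]
    exact ⟨(u, v), huv, rfl⟩
  obtain ⟨D, hDsub, hD, hacc'⟩ := exists_sublist_append_mem_accepts M hacc
  rw [hM] at hacc'
  obtain ⟨⟨u', v'⟩, hp, hpD⟩ := hacc'
  have hDfst : D.filterMap Prod.fst = [] := by
    refine List.filterMap_eq_nil_iff.mpr fun c hc => ?_
    obtain ⟨b, -, rfl⟩ := List.mem_map.mp (hDsub.subset hc)
    rfl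
  have hu' : u' = u := by
    rw [← filterMap_fst_conv u' v', ← hpD, List.filterMap_append, filterMap_fst_conv, hDfst,
      List.append_nil]
  have hv' : v' = v.take u.length ++ D.filterMap Prod.snd := by
    rw [← filterMap_snd_conv u' v', ← hpD, List.filterMap_append, filterMap_snd_conv]
  have := List.length_filterMap_le Prod.snd D
  rw [← hfun u v' v (hu' ▸ hp) huv, hv', List.length_append, List.length_take]
  omega

lemma IsRegularRelOfStates.length_le_of_left_unique (hR : IsRegularRelOfStates R q)
    (hinj : ∀ u u' v, (u, v) ∈ R → (u', v) ∈ R → u = u') {u v : List α} (huv : (u, v) ∈ R) :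
    u.length ≤ v.length + q :=
  hR.preimage_swap.length_le_of_right_unique (fun v u u' hu hu' => hinj u u' v hu hu') huv

end RegularRelations

section CayleyAutomatic

variable {G : Type*} [Group G] {A : Set G} {L : Language (Alph A)} {ψ : List (Alph A) → G}

def repRel (L : Language (Alph A)) (ψ : List (Alph A) → G) (s : G) :
    Set (List (Alph A) × List (Alph A)) :=
  {p | p.1 ∈ L ∧ p.2 ∈ L ∧ ψ p.2 = ψ p.1 * s}

def RespectsShortRelations {M : Type*} [Monoid M] (θ : Alph A → M) (r : ℕ) : Prop :=
  ∀ u v : List (Alph A), u.length + v.length ≤ r → eval A u = eval A v →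
    (u.map θ).prod = (v.map θ).prod

lemma RespectsShortRelations.map_inv {H : Type*} [Group H] {θ : Alph A → H} {r : ℕ}
    (hθ : RespectsShortRelations θ r) (hr : 2 ≤ r) (x : Alph A) : θ x.inv = (θ x)⁻¹ := by
  refine eq_inv_of_mul_eq_one_right ?_
  simpa using hθ [x, x.inv] [] (by simpa using hr) (by simp)

lemma RespectsShortRelations.prod_map_eq_of_cayleyDist_take_le {M : Type*} [Monoid M]
    (hA : Surjective (eval A)) {θ : Alph A → M} {r E : ℕ}
    (hθ : RespectsShortRelations θ r) (hE : 2 * E + 2 ≤ r) {P Q : List (Alph A)}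
    (hPQ : eval A P = eval A Q)
    (hdist : ∀ i, cayleyDist A (eval A (P.take i)) (eval A (Q.take i)) ≤ E) :
    (P.map θ).prod = (Q.map θ).prod := by
  choose c hc hcl using fun i =>
    exists_eval_eq_and_length_eq_wordLength hA ((eval A (P.take i))⁻¹ * eval A (Q.take i))
  have hclen (i : ℕ) : (c i).length ≤ E := (hcl i).trans_le (hdist i)
  have hθ_one (i : ℕ) (h : eval A (c i) = 1) : ((c i).map θ).prod = 1 :=
    hθ (c i) [] (by simpa using (hclen i).trans (by omega)) (by simpa using h)
  have hladder (i : ℕ) :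
      ((P.take i).map θ).prod * ((c i).map θ).prod = ((Q.take i).map θ).prod := by
    induction i with
    | zero => simp [hθ_one 0 (by simp [hc])]
    | succ i ih =>
      -- each rung `P[i] · c (i + 1) = c i · Q[i]` of the ladder is a short relation
      have hrung :
          ((P[i]?.toList ++ c (i + 1)).map θ).prod = ((c i ++ Q[i]?.toList).map θ).prod := by
        refine hθ _ _ ?_ ?_
        · have := hclen i
          have := hclen (i + 1)
          have : (P[i]?.toList).length ≤ 1 := by cases P[i]? <;> simp
          have : (Q[i]?.toList).length ≤ 1 := by cases Q[i]? <;> simp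
          simp only [List.length_append]
          omega
        · simp only [eval_append, hc, List.take_add_one]
          group
      simp only [List.take_add_one, List.map_append, List.prod_append] at hrung ⊢
      rw [mul_assoc, hrung, ← mul_assoc, ih]
  have hend := hladder (max P.length Q.length)
  rwa [List.take_of_length_le (le_max_left _ _), List.take_of_length_le (le_max_right _ _),
    hθ_one _ (by rw [hc, List.take_of_length_le (le_max_left _ _),
      List.take_of_length_le (le_max_right _ _), hPQ, inv_mul_cancel]), mul_one] at hend

lemma cayleyDist_eval_take_le_of_mem_repRel (hA : Surjective (eval A)) {s : G} {q : ℕ}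
    (hR : IsRegularRelOfStates (repRel L ψ s) q) {n Φ : ℕ}
    (hdist : ∀ w ∈ L, w.length ≤ n → cayleyDist A (eval A w) (ψ w) ≤ Φ)
    {u v : List (Alph A)} (huv : (u, v) ∈ repRel L ψ s) (hu : u.length + q ≤ n)
    (hv : v.length + q ≤ n) (i : ℕ) :
    cayleyDist A (eval A (u.take i)) (eval A (v.take i)) ≤ 2 * Φ + 2 * q + wordLength A s := by
  obtain ⟨x, y, hx, hy, hu', hv', hψ⟩ := hR.exists_take_append_mem huv i
  have hlen_u : (u.take i ++ x).length ≤ n := by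
    simp only [List.length_append, List.length_take]; omega
  have hlen_v : (v.take i ++ y).length ≤ n := by
    simp only [List.length_append, List.length_take]; omega
  have h₁ := cayleyDist_eval_append_le (u.take i) x
  have h₂ : cayleyDist A (eval A (u.take i ++ x)) (ψ (u.take i ++ x)) ≤ Φ := hdist _ hu' hlen_u
  have h₃ : cayleyDist A (ψ (u.take i ++ x)) (ψ (v.take i ++ y)) = wordLength A s := by
    rw [hψ, cayleyDist_mul_right]
  have h₄ : cayleyDist A (ψ (v.take i ++ y)) (eval A (v.take i ++ y)) ≤ Φ :=
    (cayleyDist_comm hA _ _).trans_le (hdist _ hv' hlen_v)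
  have h₅ := (cayleyDist_comm hA _ _).trans_le (cayleyDist_eval_append_le (v.take i) y)
  have := cayleyDist_triangle hA (eval A (u.take i)) (eval A (u.take i ++ x)) (eval A (v.take i))
  have := cayleyDist_triangle hA (eval A (u.take i ++ x)) (ψ (u.take i ++ x)) (eval A (v.take i))
  have := cayleyDist_triangle hA (ψ (u.take i ++ x)) (ψ (v.take i ++ y)) (eval A (v.take i))
  have := cayleyDist_triangle hA (ψ (v.take i ++ y)) (eval A (v.take i ++ y)) (eval A (v.take i))
  omega

lemma repRel_right_unique (hinj : Set.InjOn ψ L) {s : G} (u v v' : List (Alph A))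
    (h : (u, v) ∈ repRel L ψ s) (h' : (u, v') ∈ repRel L ψ s) : v = v' :=
  hinj h.2.1 h'.2.1 (h.2.2.trans h'.2.2.symm)

lemma repRel_left_unique (hinj : Set.InjOn ψ L) {s : G} (u u' v : List (Alph A))
    (h : (u, v) ∈ repRel L ψ s) (h' : (u', v) ∈ repRel L ψ s) : u = u' :=
  hinj h.1 h'.1 (mul_right_cancel (h.2.2.symm.trans h'.2.2))

lemma IsCayleyAutomaticRep.exists_isRegularRelOfStates (h : IsCayleyAutomaticRep A L ψ)
    (hA : A.Finite) : ∃ q, ∀ s ∈ A, IsRegularRelOfStates (repRel L ψ s) q := by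
  choose! q hq using fun s hs => (h.2.2 s hs).exists_isRegularRelOfStates
  obtain ⟨B, hB⟩ := (hA.image q).bddAbove
  exact ⟨B, fun s hs => (hq s hs).mono (hB (Set.mem_image_of_mem q hs))⟩

lemma invFunOn_mem_of_bijOn (hbij : Set.BijOn ψ L Set.univ) (g : G) : invFunOn ψ L g ∈ L :=
  hbij.surjOn.mapsTo_invFunOn (Set.mem_univ g)

lemma apply_invFunOn_of_bijOn (hbij : Set.BijOn ψ L Set.univ) (g : G) :
    ψ (invFunOn ψ L g) = g :=
  hbij.surjOn.rightInvOn_invFunOn (Set.mem_univ g)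

lemma invFunOn_mem_repRel (hbij : Set.BijOn ψ L Set.univ) (g s : G) :
    (invFunOn ψ L g, invFunOn ψ L (g * s)) ∈ repRel L ψ s :=
  ⟨invFunOn_mem_of_bijOn hbij g, invFunOn_mem_of_bijOn hbij _, by
    simp only [apply_invFunOn_of_bijOn hbij]⟩

lemma length_invFunOn_mul_le (hbij : Set.BijOn ψ L Set.univ) {q : ℕ}
    (hreg : ∀ s ∈ A, IsRegularRelOfStates (repRel L ψ s) q) (g : G) (x : Alph A) :
    (invFunOn ψ L (g * x.1)).length ≤ (invFunOn ψ L g).length + q := by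
  rcases x.2 with hx | hx
  · exact (hreg _ hx).length_le_of_right_unique (repRel_right_unique hbij.injOn)
      (invFunOn_mem_repRel hbij g _)
  · have h := invFunOn_mem_repRel hbij (g * x.1) x.1⁻¹
    rw [mul_inv_cancel_right] at h
    exact (hreg _ hx).length_le_of_left_unique (repRel_left_unique hbij.injOn) h

lemma length_invFunOn_eval_le (hbij : Set.BijOn ψ L Set.univ) {q : ℕ}
    (hreg : ∀ s ∈ A, IsRegularRelOfStates (repRel L ψ s) q) (w : List (Alph A)) :
    (invFunOn ψ L (eval A w)).length ≤ (invFunOn ψ L 1).length + q * w.length := by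
  induction w using List.reverseRecOn with
  | nil => simp
  | append_singleton w x ih =>
    have := length_invFunOn_mul_le hbij hreg (eval A w) x
    rw [eval_append, eval_singleton, List.length_append, List.length_singleton, mul_add_one]
    omega

noncomputable def geodesic (hA : Surjective (eval A)) (g : G) : List (Alph A) :=
  (exists_eval_eq_and_length_eq_wordLength hA g).choose

@[simp] lemma eval_geodesic (hA : Surjective (eval A)) (g : G) : eval A (geodesic hA g) = g :=
  (exists_eval_eq_and_length_eq_wordLength hA g).choose_spec.1

@[simp] lemma length_geodesic (hA : Surjective (eval A)) (g : G) :
    (geodesic hA g).length = wordLength A g :=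
  (exists_eval_eq_and_length_eq_wordLength hA g).choose_spec.2

noncomputable def repPath (hA : Surjective (eval A)) (L : Language (Alph A))
    (ψ : List (Alph A) → G) (g : G) : List (Alph A) :=
  invFunOn ψ L g ++ geodesic hA ((eval A (invFunOn ψ L g))⁻¹ * g)

@[simp] lemma eval_repPath (hA : Surjective (eval A)) (g : G) :
    eval A (repPath hA L ψ g) = g := by
  simp [repPath]

variable {q r n Φ : ℕ}

lemma prod_map_repPath_append_singleton_of_regular {M : Type*} [Monoid M] {θ : Alph A → M}
    (hA : Surjective (eval A)) (hbij : Set.BijOn ψ L Set.univ) (hθ : RespectsShortRelations θ r)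
    (hdist : ∀ w ∈ L, w.length ≤ n → cayleyDist A (eval A w) (ψ w) ≤ Φ)
    (hr : 8 * Φ + 4 * q + 8 ≤ r) {x : Alph A} (hR : IsRegularRelOfStates (repRel L ψ x.1) q)
    {g : G} (hg : (invFunOn ψ L g).length + q ≤ n)
    (hgx : (invFunOn ψ L (g * x.1)).length + q ≤ n) :
    ((repPath hA L ψ g ++ [x]).map θ).prod = ((repPath hA L ψ (g * x.1)).map θ).prod := by
  have htail (h : G) (hh : (invFunOn ψ L h).length ≤ n) :
      (geodesic hA ((eval A (invFunOn ψ L h))⁻¹ * h)).length ≤ Φ := by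
    have := hdist _ (invFunOn_mem_of_bijOn hbij h) hh
    rw [apply_invFunOn_of_bijOn hbij] at this
    rwa [length_geodesic]
  -- prefixes of `repPath g ++ [x]` stay within `Φ + 1` of those of `ψ⁻¹ g`, which stay within
  -- `2Φ + 2q + 1` of those of `ψ⁻¹ (g x)`, which stay within `Φ` of those of `repPath (g x)`
  refine hθ.prod_map_eq_of_cayleyDist_take_le hA (E := 4 * Φ + 2 * q + 3) (by omega)
    (by simp) fun i => ?_
  have h₁ := cayleyDist_eval_take_append_le (invFunOn ψ L g)
    (geodesic hA ((eval A (invFunOn ψ L g))⁻¹ * g) ++ [x]) i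
  rw [← List.append_assoc, cayleyDist_comm hA] at h₁
  have h₂ := cayleyDist_eval_take_le_of_mem_repRel hA hR hdist
    (invFunOn_mem_repRel hbij g x.1) (by omega) (by omega) i
  have h₃ := cayleyDist_eval_take_append_le (invFunOn ψ L (g * x.1))
    (geodesic hA ((eval A (invFunOn ψ L (g * x.1)))⁻¹ * (g * x.1))) i
  have := htail g (by omega)
  have := htail (g * x.1) (by omega)
  have := wordLength_eval_le [x]
  have := cayleyDist_triangle hA (eval A ((repPath hA L ψ g ++ [x]).take i))
    (eval A ((invFunOn ψ L g).take i)) (eval A ((repPath hA L ψ (g * x.1)).take i))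
  have := cayleyDist_triangle hA (eval A ((invFunOn ψ L g).take i))
    (eval A ((invFunOn ψ L (g * x.1)).take i)) (eval A ((repPath hA L ψ (g * x.1)).take i))
  simp only [repPath, List.length_append, List.length_singleton, eval_singleton] at *
  omega

variable {H : Type*} [Group H] {θ : Alph A → H}

lemma prod_map_repPath_append_singleton (hA : Surjective (eval A))
    (hbij : Set.BijOn ψ L Set.univ) (hθ : RespectsShortRelations θ r)
    (hreg : ∀ s ∈ A, IsRegularRelOfStates (repRel L ψ s) q)
    (hdist : ∀ w ∈ L, w.length ≤ n → cayleyDist A (eval A w) (ψ w) ≤ Φ)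
    (hr : 8 * Φ + 4 * q + 8 ≤ r) (x : Alph A) {g : G}
    (hg : (invFunOn ψ L g).length + q ≤ n) (hgx : (invFunOn ψ L (g * x.1)).length + q ≤ n) :
    ((repPath hA L ψ g ++ [x]).map θ).prod = ((repPath hA L ψ (g * x.1)).map θ).prod := by
  rcases x.2 with hx | hx
  · exact prod_map_repPath_append_singleton_of_regular hA hbij hθ hdist hr (hreg _ hx) hg hgx
  · -- run the step for the letter `x⁻¹ ∈ A` backwards, from `g * x` to `g`
    have h := prod_map_repPath_append_singleton_of_regular hA hbij hθ hdist hr (x := x.inv)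
      (hreg _ hx) hgx (by rwa [Alph.val_inv, mul_inv_cancel_right])
    rw [Alph.val_inv, mul_inv_cancel_right] at h
    simp only [List.map_append, List.map_singleton, List.prod_append, List.prod_singleton] at h ⊢
    rw [← h, mul_assoc, hθ.map_inv (by omega), inv_mul_cancel, mul_one]

theorem prod_map_eq_one_of_eval_eq_one (hA : Surjective (eval A))
    (hbij : Set.BijOn ψ L Set.univ) (hreg : ∀ s ∈ A, IsRegularRelOfStates (repRel L ψ s) q)
    (hθ : RespectsShortRelations θ r) (hr : 8 * Φ + 4 * q + 8 ≤ r)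
    {u₀ : List (Alph A)} (hu₀ : u₀ ∈ L) (hψu₀ : ψ u₀ = 1) {w : List (Alph A)}
    (hw : eval A w = 1)
    (hdist : ∀ v ∈ L, v.length ≤ u₀.length + q * w.length + q →
      cayleyDist A (eval A v) (ψ v) ≤ Φ) :
    (w.map θ).prod = 1 := by
  have hu₀' : invFunOn ψ L 1 = u₀ :=
    hbij.injOn (invFunOn_mem_of_bijOn hbij 1) hu₀ (by rw [apply_invFunOn_of_bijOn hbij, hψu₀])
  have hlen (v : List (Alph A)) (hv : v.length ≤ w.length) :
      (invFunOn ψ L (eval A v)).length + q ≤ u₀.length + q * w.length + q := by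
    have := length_invFunOn_eval_le hbij hreg v
    rw [hu₀'] at this
    have := Nat.mul_le_mul_left q hv
    omega
  have htel (v : List (Alph A)) (hv : v.length ≤ w.length) :
      ((repPath hA L ψ 1).map θ).prod * (v.map θ).prod =
        ((repPath hA L ψ (eval A v)).map θ).prod := by
    induction v using List.reverseRecOn with
    | nil => simp
    | append_singleton v x ih =>
      simp only [List.length_append, List.length_singleton] at hv
      have hx := hlen (v ++ [x]) (by simpa using hv)
      rw [eval_append, eval_singleton] at hx
      rw [eval_append, eval_singleton, ← prod_map_repPath_append_singleton hA hbij hθ hreg hdist hr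
        x (hlen v (by omega)) hx, List.map_append, List.map_append, List.prod_append,
        List.prod_append, ← mul_assoc, ih (by omega)]
  simpa [hw] using htel w le_rfl

end CayleyAutomatic

lemma FFun.Prec.exists_mul_toFun_lt {f : FFun} (hf : f.Prec identF) {K M : ℕ} (hK : 0 < K)
    (hM : 0 < M) (N : ℕ) : ∃ n, N ≤ n ∧ (K : ℝ) * f.toFun (M * n) < n := by
  by_contra! h
  exact hf.2 ⟨hf.1, K, M, N + f.Q + 1, hK, hM, by omega, by simp [identF], by omega,
    fun n hn => h n (by omega)⟩

lemma FFun.Prec.exists_mul_floor_lt {f : FFun} (hf : f.Prec identF) {K M N : ℕ}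
    (hM : 0 < M) (hN : f.Q ≤ N) (c d C e : ℕ) :
    ∃ m, e ≤ m ∧ C * ⌊(K : ℝ) * f.toFun (M * (N + c + d * m))⌋₊ < m := by
  obtain ⟨m, hm, hlt⟩ := hf.exists_mul_toFun_lt (K := C * K + 1)
    (M := M * (N + c + d + 1)) (by omega) (by positivity) (e + 1)
  refine ⟨m, by omega, ?_⟩
  have harg : N + c + d * m ≤ (N + c + d + 1) * m := by nlinarith
  have hQ : f.Q ≤ M * (N + c + d * m) :=
    hN.trans ((by omega : N ≤ N + c + d * m).trans (Nat.le_mul_of_pos_left _ hM))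
  have hmono := f.mono _ _ hQ (Nat.mul_le_mul_left M harg)
  rw [← mul_assoc] at hmono
  have hnonneg := f.nonneg _ hQ
  have hfloor := Nat.floor_le (mul_nonneg (Nat.cast_nonneg K) hnonneg)
  have h₁ := mul_le_mul_of_nonneg_left hfloor (Nat.cast_nonneg (α := ℝ) C)
  have h₂ := mul_le_mul_of_nonneg_left hmono (Nat.cast_nonneg (α := ℝ) (C * K))
  have h₃ := hnonneg.trans hmono
  have : ((C * ⌊(K : ℝ) * f.toFun (M * (N + c + d * m))⌋₊ : ℕ) : ℝ) < m := by
    push_cast at hlt h₂ ⊢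
    nlinarith
  exact_mod_cast this

namespace Lamplighter

lemma lampShift_apply (m : ℤ) (f : Lamps) (p : ℤ) : lampShift m f p = f (p - m) := by
  have := Finsupp.mapDomain_apply (add_left_injective m) f (p - m)
  rwa [sub_add_cancel] at this

def mk (f : Lamps) (k : ℤ) : Lamplighter := (f, k)

@[simp] lemma mk_fst (f : Lamps) (k : ℤ) : (mk f k).1 = f := rfl

@[simp] lemma mk_snd (f : Lamps) (k : ℤ) : (mk f k).2 = k := rfl

@[simp] lemma fst_mul_apply (g h : Lamplighter) (p : ℤ) :
    (g * h).1 p = g.1 p + h.1 (p - g.2) := by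
  rw [mul_def, Finsupp.add_apply, lampShift_apply]

@[simp] lemma snd_mul (g h : Lamplighter) : (g * h).2 = g.2 + h.2 := rfl

@[simp] lemma fst_inv_apply (g : Lamplighter) (p : ℤ) : g⁻¹.1 p = g.1 (p + g.2) := by
  rw [inv_def, lampShift_apply, sub_neg_eq_add]

@[simp] lemma snd_inv (g : Lamplighter) : g⁻¹.2 = -g.2 := rfl

@[simp] lemma fst_one : (1 : Lamplighter).1 = 0 := rfl

@[simp] lemma snd_one : (1 : Lamplighter).2 = 0 := rfl

@[simp] lemma fst_a : a.1 = Finsupp.single 0 1 := rfl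

@[simp] lemma snd_a : a.2 = 0 := rfl

@[simp] lemma fst_t : t.1 = 0 := rfl

@[simp] lemma snd_t : t.2 = 1 := rfl

lemma ext_iff {g h : Lamplighter} : g = h ↔ (∀ p, g.1 p = h.1 p) ∧ g.2 = h.2 :=
  ⟨by rintro rfl; simp, fun ⟨h₁, h₂⟩ => Prod.ext (Finsupp.ext h₁) h₂⟩

lemma a_inv : a⁻¹ = a := by
  rw [ext_iff]; simp

lemma t_zpow (k : ℤ) : t ^ k = mk 0 k := by
  induction k using Int.induction_on with
  | zero => rfl
  | succ k ih => rw [zpow_add_one, ih, ext_iff]; simp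
  | pred k ih => rw [zpow_sub_one, ih, ext_iff]; simp [sub_eq_add_neg]

lemma t_pow (n : ℕ) : t ^ n = mk 0 n := by
  rw [← zpow_natCast, t_zpow]

lemma mul_self_eq_one_of_snd_eq_zero {g : Lamplighter} (hg : g.2 = 0) : g * g = 1 := by
  rw [ext_iff]
  refine ⟨fun p => ?_, by simp [hg]⟩
  simp [hg, CharTwo.add_self_eq_zero]

lemma mk_single_eq_conj (i : ℤ) : mk (Finsupp.single i 1) 0 = t ^ i * a * t ^ (-i) := by
  rw [t_zpow, t_zpow, ext_iff]
  refine ⟨fun p => ?_, by simp⟩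
  simp [Finsupp.single_apply, sub_eq_zero, eq_comm]

lemma mem_closure_mk_single (i : ℤ) :
    mk (Finsupp.single i 1) 0 ∈ Subgroup.closure ({a, t} : Set Lamplighter) := by
  rw [mk_single_eq_conj]
  exact mul_mem (mul_mem (zpow_mem (Subgroup.subset_closure (by simp)) _)
    (Subgroup.subset_closure (by simp))) (zpow_mem (Subgroup.subset_closure (by simp)) _)

lemma closure_eq_top : Subgroup.closure ({a, t} : Set Lamplighter) = ⊤ := by
  refine eq_top_iff.mpr fun g _ => ?_
  have hg : g = mk g.1 0 * t ^ g.2 := by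
    rw [t_zpow, ext_iff]; simp
  rw [hg]
  refine mul_mem ?_ (zpow_mem (Subgroup.subset_closure (by simp)) _)
  induction g.1 using Finsupp.induction_linear with
  | zero => exact one_mem _
  | add f₁ f₂ h₁ h₂ =>
    convert mul_mem h₁ h₂ using 1
    rw [ext_iff]; simp
  | single i b =>
    obtain rfl | rfl : b = 0 ∨ b = 1 := by revert b; decide
    · rw [Finsupp.single_zero]
      exact one_mem _
    · exact mem_closure_mk_single i

lemma eq_a_or_eq_t_or_eq_t_inv {g : Lamplighter}
    (hg : g ∈ ({a, t} : Set Lamplighter) ∪ {a, t}⁻¹) : g = a ∨ g = t ∨ g = t⁻¹ := by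
  simp only [Set.mem_union, Set.mem_insert_iff, Set.mem_singleton_iff, Set.mem_inv] at hg
  rcases hg with (rfl | rfl) | (h | h)
  · exact Or.inl rfl
  · exact Or.inr (Or.inl rfl)
  · exact Or.inl (by rw [← inv_inv g, h, a_inv])
  · exact Or.inr (Or.inr (by rw [← h, inv_inv]))

lemma eq_zero_of_fst_val_apply_ne_zero (x : Alph ({a, t} : Set Lamplighter)) {p : ℤ}
    (hp : x.1.1 p ≠ 0) : p = 0 := by
  rcases eq_a_or_eq_t_or_eq_t_inv x.2 with h | h | h <;> rw [h] at hp
  · by_contra h0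
    simp [Ne.symm h0] at hp
  all_goals simp at hp

lemma natAbs_snd_val_le (x : Alph ({a, t} : Set Lamplighter)) : x.1.2.natAbs ≤ 1 := by
  rcases eq_a_or_eq_t_or_eq_t_inv x.2 with h | h | h <;> simp [h]

lemma natAbs_sub_snd_le_length (u : List (Alph ({a, t} : Set Lamplighter))) {p : ℤ}
    (hp : (eval _ u).1 p ≠ 0) : (p - (eval _ u).2).natAbs ≤ u.length := by
  induction u using List.reverseRecOn generalizing p with
  | nil => simp at hp
  | append_singleton u x ih =>
    have := natAbs_snd_val_le x
    simp only [eval_append, eval_singleton, fst_mul_apply, snd_mul, List.length_append,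
      List.length_singleton] at hp ⊢
    by_cases hu : (eval _ u).1 p = 0
    · rw [hu, zero_add] at hp
      have := eq_zero_of_fst_val_apply_ne_zero x hp
      omega
    · have := ih hu
      omega

/-- The lamplighter acting on configurations, except that the lamp at `p` may only be toggled
while the lamp at `p + r + 1` is off. -/
def guardedAct (r : ℕ) (g : Lamplighter) (y : ℤ → ZMod 2) : ℤ → ZMod 2 :=
  fun p => y (p - g.2) + g.1 p * (1 + y (p + r + 1 - g.2))

variable {r : ℕ}

lemma guardedAct_one : guardedAct r 1 = id := by
  funext y p
  simp [guardedAct]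

lemma guardedAct_comp {g h : Lamplighter} (hgh : ∀ p, g.1 p * h.1 (p + r + 1 - g.2) = 0) :
    guardedAct r g ∘ guardedAct r h = guardedAct r (g * h) := by
  funext y p
  simp only [Function.comp, guardedAct, fst_mul_apply, snd_mul]
  have e₁ : p - g.2 - h.2 = p - (g.2 + h.2) := by ring
  have e₂ : p - g.2 + r + 1 - h.2 = p + r + 1 - (g.2 + h.2) := by ring
  have e₃ : p + r + 1 - g.2 - h.2 = p + r + 1 - (g.2 + h.2) := by ring
  rw [e₁, e₂, e₃]
  linear_combination (1 + y (p + r + 1 - g.2 + r + 1 - h.2)) * hgh p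

lemma fst_apply_mul_fst_apply_eq_zero {g : Lamplighter} (hg : ∀ p, g.1 p ≠ 0 → p = 0)
    {p q : ℤ} (hpq : p ≠ q) : g.1 p * g.1 q = 0 := by
  by_contra h
  exact hpq ((hg p (left_ne_zero_of_mul h)).trans (hg q (right_ne_zero_of_mul h)).symm)

noncomputable def guardedPerm (r : ℕ) (g : Lamplighter) (hg : ∀ p, g.1 p ≠ 0 → p = 0) :
    Equiv.Perm (ℤ → ZMod 2) where
  toFun := guardedAct r g
  invFun := guardedAct r g⁻¹
  left_inv y := by
    rw [← Function.comp_apply (f := guardedAct r g⁻¹), guardedAct_comp, inv_mul_cancel,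
      guardedAct_one, id]
    intro p
    simpa using fst_apply_mul_fst_apply_eq_zero hg (p := p + g.2) (q := p + r + 1 + g.2)
      (by omega)
  right_inv y := by
    rw [← Function.comp_apply (f := guardedAct r g), guardedAct_comp, mul_inv_cancel,
      guardedAct_one, id]
    intro p
    simpa using fst_apply_mul_fst_apply_eq_zero hg (p := p) (q := p + r + 1) (by omega)

noncomputable def guardedRep (r : ℕ) (x : Alph ({a, t} : Set Lamplighter)) :
    Equiv.Perm (ℤ → ZMod 2) :=
  guardedPerm r x.1 fun _ => eq_zero_of_fst_val_apply_ne_zero x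

lemma coe_prod_map_guardedRep (u : List (Alph ({a, t} : Set Lamplighter)))
    (hu : u.length ≤ r + 1) : ⇑(u.map (guardedRep r)).prod = guardedAct r (eval _ u) := by
  induction u using List.reverseRecOn with
  | nil => simp [guardedAct_one]
  | append_singleton u x ih =>
    rw [List.length_append, List.length_singleton] at hu
    rw [List.map_append, List.prod_append, List.map_singleton, List.prod_singleton,
      Equiv.Perm.coe_mul, ih (by omega), eval_append, eval_singleton]
    -- the guard of the lamp toggled by `x` is `r + 1` away from the lamplighter, hence still off
    refine guardedAct_comp fun p => ?_
    by_contra h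
    have := natAbs_sub_snd_le_length u (left_ne_zero_of_mul h)
    have := eq_zero_of_fst_val_apply_ne_zero x (right_ne_zero_of_mul h)
    omega

lemma respectsShortRelations_guardedRep (r : ℕ) :
    RespectsShortRelations (guardedRep r) (r + 1) := fun u v huv he =>
  DFunLike.coe_injective <| by
    rw [coe_prod_map_guardedRep u (by omega), coe_prod_map_guardedRep v (by omega), he]

noncomputable def letterA : Alph ({a, t} : Set Lamplighter) := ⟨a, Or.inl (Or.inl rfl)⟩

def letterT : Alph ({a, t} : Set Lamplighter) := ⟨t, Or.inl (Or.inr rfl)⟩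

@[simp] lemma val_letterA : letterA.1 = a := rfl

@[simp] lemma val_letterT : letterT.1 = t := rfl

noncomputable def twoLampsWord (m : ℕ) : List (Alph ({a, t} : Set Lamplighter)) :=
  [letterA] ++ List.replicate m letterT ++ [letterA] ++ List.replicate m letterT.inv

@[simp] lemma length_twoLampsWord (m : ℕ) : (twoLampsWord m).length = 2 * m + 2 := by
  simp only [twoLampsWord, List.length_append, List.length_singleton, List.length_replicate]
  ring

lemma eval_twoLampsWord_append_self (m : ℕ) :
    eval _ (twoLampsWord m ++ twoLampsWord m) = 1 := by
  refine (eval_append _ _).trans (mul_self_eq_one_of_snd_eq_zero ?_)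
  simp [twoLampsWord, eval_replicate, t_pow, inv_pow]

lemma guardedAct_mk_single (q : ℤ) (y : ℤ → ZMod 2) :
    guardedAct r (mk (Finsupp.single q 1) 0) y = y + Pi.single q (1 + y (q + r + 1)) := by
  funext p
  by_cases hp : p = q
  · subst hp
    simp [guardedAct]
  · simp [guardedAct, hp]

lemma coe_prod_map_guardedRep_twoLampsWord (r : ℕ) :
    ⇑((twoLampsWord (r + 1)).map (guardedRep r)).prod =
      guardedAct r a ∘ guardedAct r (mk (Finsupp.single (r + 1) 1) 0) := by
  simp only [twoLampsWord, List.map_append, List.prod_append, Equiv.Perm.coe_mul]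
  rw [coe_prod_map_guardedRep [letterA] (by simp),
    coe_prod_map_guardedRep (List.replicate _ letterT) (by simp),
    coe_prod_map_guardedRep (List.replicate _ letterT.inv) (by simp), Function.comp_assoc,
    Function.comp_assoc, guardedAct_comp (by simp [eval_replicate, t_pow]),
    guardedAct_comp (by simp [eval_replicate, t_pow]), mk_single_eq_conj]
  simp [eval_replicate, ← zpow_natCast, mul_assoc]

lemma prod_map_guardedRep_ne_one (r : ℕ) :
    ((twoLampsWord (r + 1) ++ twoLampsWord (r + 1)).map (guardedRep r)).prod ≠ 1 := by
  intro h
  have := congrFun (congrFun (congrArg DFunLike.coe h) 0) 0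
  rw [List.map_append, List.prod_append, Equiv.Perm.coe_mul, coe_prod_map_guardedRep_twoLampsWord,
    show a = mk (Finsupp.single 0 1) 0 from rfl] at this
  have h₁ : (r : ℤ) + 1 ≠ 0 := by omega
  have h₂ : (r : ℤ) + 1 + r + 1 ≠ 0 := by omega
  simp +decide [guardedAct_mk_single, h₁, h₁.symm, h₂] at this

end Lamplighter

end CAG

open CAG in
/-- For every `f ∈ 𝔉` with `f ≺ 𝔦` (where `𝔦(n) = n`), the lamplighter group `ℤ₂ ≀ ℤ` does
not belong to the class `ℬ_f`. -/
theorem lamplighter_not_mem_classB_of_prec_ident (f : FFun) (hf : f.Prec identF) :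
    ¬ InB ({Lamplighter.a, Lamplighter.t} : Set Lamplighter) f := by
  rintro ⟨L, ψ, hrep, K, M, N, -, hM, -, hNQ, hbound⟩
  obtain ⟨q, hreg⟩ := hrep.exists_isRegularRelOfStates (Set.toFinite _)
  obtain ⟨u₀, hu₀, hψu₀⟩ := hrep.2.1.surjOn (Set.mem_univ 1)
  obtain ⟨m, hm, hΦ⟩ := hf.exists_mul_floor_lt (K := K) hM hNQ (u₀.length + 9 * q) (4 * q) 16
    (8 * q + 16)
  -- `n` bounds the words used along the relator `w`, of length `4m + 8`, and the constants `16`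
  -- and `8q + 16` make the resulting distortion bound `Φ` satisfy `8Φ + 4q + 8 ≤ m + 1`
  set n := N + (u₀.length + 9 * q) + 4 * q * m
  set w := Lamplighter.twoLampsWord (m + 1) ++ Lamplighter.twoLampsWord (m + 1)
  have hdist (v) (hv : v ∈ L) (hvl : v.length ≤ u₀.length + q * w.length + q) :
      cayleyDist {Lamplighter.a, Lamplighter.t} (eval _ v) (ψ v) ≤
        ⌊(K : ℝ) * f.toFun (M * n)⌋₊ := by
    simp only [w, List.length_append, Lamplighter.length_twoLampsWord] at hvl
    exact Nat.le_floor (hbound n (by omega) v hv (by simp only [n]; linarith))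
  exact Lamplighter.prod_map_guardedRep_ne_one m <| prod_map_eq_one_of_eval_eq_one
    (eval_surjective_of_closure_eq_top Lamplighter.closure_eq_top) hrep.2.1 hreg
    (Lamplighter.respectsShortRelations_guardedRep m) (by omega) hu₀ hψu₀
    (Lamplighter.eval_twoLampsWord_append_self _) hdist
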